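/- arXiv:1307.1885 — 4 statements merged into one kernel-verified Lean document; each statement's English description precedes it below -/
import Mathlib

section
/- In the standard model M(F) over a Euclidean field F, two distinct particles (lines of slope less than 1 in F^4) a and a' are parallel if and only if the translated a' intersecting a coincides with a; equivalently, two particles that do not meet and admit two further particles c,d meeting them and each other in 5 distinct points must be parallel lines. -/
/-- Squared Euclidean norm on `F^3`. -/
def nsq {F : Type*} [Field F] [LinearOrder F] [IsStrictOrderedRing F] (v : Fin 3 → F) : F :=
  v 0 ^ 2 + v 1 ^ 2 + v 2 ^ 2

/-- Standard inner product on `F^3`. -/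
def dot3 {F : Type*} [Field F] [LinearOrder F] [IsStrictOrderedRing F] (u v : Fin 3 → F) : F :=
  u 0 * v 0 + u 1 * v 1 + u 2 * v 2

/-- A Euclidean field: an ordered field in which every positive element has a square root. -/
def IsEuclidean (F : Type*) [Field F] [LinearOrder F] [IsStrictOrderedRing F] : Prop :=
  ∀ x : F, 0 < x → ∃ y : F, y ^ 2 = x

/-- A line in `F^4 = F × F^3`. -/
def IsLine {F : Type*} [Field F] [LinearOrder F] [IsStrictOrderedRing F] (L : Set (F × (Fin 3 → F))) : Prop :=
  ∃ p d : F × (Fin 3 → F), d ≠ 0 ∧ L = {x | ∃ s : F, x = p + s • d}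

/-- A particle: a line in `F^4` of slope less than 1 (spatial speed below light speed). -/
def IsParticle {F : Type*} [Field F] [LinearOrder F] [IsStrictOrderedRing F] (L : Set (F × (Fin 3 → F))) : Prop :=
  ∃ p d : F × (Fin 3 → F), d.1 ≠ 0 ∧ nsq d.2 < d.1 ^ 2 ∧
    L = {x | ∃ s : F, x = p + s • d}

/-- Forward light signal from `p` to `q` (degenerate case `p = q` allowed):
the time increases and the spatial distance equals the elapsed time. -/
def Sig {F : Type*} [Field F] [LinearOrder F] [IsStrictOrderedRing F] (p q : F × (Fin 3 → F)) : Prop :=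
  p.1 ≤ q.1 ∧ nsq (q.2 - p.2) = (q.1 - p.1) ^ 2

/-- A vertical line: a line parallel to the time axis. -/
def IsVertical {F : Type*} [Field F] [LinearOrder F] [IsStrictOrderedRing F] (L : Set (F × (Fin 3 → F))) : Prop :=
  ∃ v0 : Fin 3 → F, L = {x | x.2 = v0}

/-- Two subsets of `F^4` are parallel when one is a translate of the other. -/
def LinesParallel {F : Type*} [Field F] [LinearOrder F] [IsStrictOrderedRing F]
    (L L' : Set (F × (Fin 3 → F))) : Prop :=
  ∃ w : F × (Fin 3 → F), L' = (fun x => x + w) '' L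

/-!
The transversals force `a` and `a'` into a common plane. Write `p₅` as an affine combination of
`p₁ ∈ a` and `p₂ ∈ a'` with weight `u` on `p₂`, and of `p₃ ∈ a` and `p₄ ∈ a'` with weight `v` on
`p₄`. Subtracting, `u - v` times the offset between base points of `a` and `a'` lies in the span of
their directions. If `u ≠ v` the lines would meet. If `u = v` the difference is a linear relation
between the two directions, nontrivial because `p₅ ≠ p₁` and `p₂ ≠ p₄`, so the directions are
proportional and `a'` is a translate of `a`.
-/

section

variable (K : Type*) {V : Type*} [Field K] [AddCommGroup V] [Module K V]

def line (p d : V) : Set V := {x | ∃ s : K, x = p + s • d}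

variable {K}

theorem mem_line_sub_of_mem_line {p d q₁ q₂ q₃ : V} (h₁ : q₁ ∈ line K p d) (h₂ : q₂ ∈ line K p d)
    (h₃ : q₃ ∈ line K p d) (h₁₂ : q₁ ≠ q₂) : q₃ ∈ line K q₁ (q₂ - q₁) := by
  obtain ⟨s₁, rfl⟩ := h₁
  obtain ⟨s₂, rfl⟩ := h₂
  obtain ⟨s₃, rfl⟩ := h₃
  have hs : s₂ - s₁ ≠ 0 := sub_ne_zero.mpr fun h => h₁₂ (by rw [h])
  refine ⟨(s₃ - s₁) / (s₂ - s₁), ?_⟩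
  match_scalars <;> field_simp <;> ring

theorem sub_notMem_span_pair_of_disjoint_line {p d p' d' : V}
    (h : Disjoint (line K p d) (line K p' d')) : p' - p ∉ Submodule.span K {d, d'} := by
  rw [Submodule.mem_span_pair]
  rintro ⟨α, β, hαβ⟩
  exact Set.disjoint_left.mp h ⟨α, rfl⟩ ⟨-β, by linear_combination (norm := module) hαβ⟩

theorem line_eq_image_add_of_eq_smul {p d p' d' : V} {l : K} (hl : l ≠ 0) (hd : d' = l • d) :
    line K p' d' = (fun x => x + (p' - p)) '' line K p d := by
  ext x
  constructor
  · rintro ⟨t, rfl⟩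
    exact ⟨p + (t * l) • d, ⟨t * l, rfl⟩, by rw [hd]; module⟩
  · rintro ⟨y, ⟨s, rfl⟩, rfl⟩
    refine ⟨s / l, ?_⟩
    rw [hd, smul_smul, div_mul_cancel₀ _ hl]
    module

theorem exists_eq_smul_of_disjoint_of_transversals {p d p' d' q₁ q₂ q₃ q₄ q₅ : V}
    (hdisj : Disjoint (line K p d) (line K p' d'))
    (h₁ : q₁ ∈ line K p d) (h₂ : q₂ ∈ line K p' d') (h₃ : q₃ ∈ line K p d) (h₄ : q₄ ∈ line K p' d')
    (h₅₁₂ : q₅ ∈ line K q₁ (q₂ - q₁)) (h₅₃₄ : q₅ ∈ line K q₃ (q₄ - q₃))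
    (h₁₅ : q₁ ≠ q₅) (h₂₄ : q₂ ≠ q₄) : ∃ l : K, d' = l • d := by
  obtain ⟨s₁, rfl⟩ := h₁
  obtain ⟨t₂, rfl⟩ := h₂
  obtain ⟨s₃, rfl⟩ := h₃
  obtain ⟨t₄, rfl⟩ := h₄
  obtain ⟨u, rfl⟩ := h₅₁₂
  obtain ⟨v, hv⟩ := h₅₃₄
  have key : (s₃ - s₁ + u * s₁ - v * s₃) • d + (v * t₄ - u * t₂) • d' = (u - v) • (p' - p) := by
    linear_combination (norm := module) -hv
  have huv : u = v := by
    by_contra huv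
    refine sub_notMem_span_pair_of_disjoint_line hdisj ?_
    rw [← Submodule.smul_mem_iff _ (sub_ne_zero.mpr huv)]
    exact Submodule.mem_span_pair.mpr ⟨_, _, key⟩
  subst huv
  have hu : u ≠ 0 := by
    rintro rfl
    exact h₁₅ (by simp)
  have ht : u * (t₄ - t₂) ≠ 0 :=
    mul_ne_zero hu (sub_ne_zero.mpr fun h => h₂₄ (by rw [h]))
  refine ⟨-((u * (t₄ - t₂))⁻¹ * ((1 - u) * (s₃ - s₁))), ?_⟩
  apply smul_right_injective V ht
  simp only [smul_smul, mul_neg, ← mul_assoc, mul_inv_cancel₀ ht, one_mul]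
  linear_combination (norm := module) key

end

theorem IsParticle.exists_eq_line {F : Type*} [Field F] [LinearOrder F] [IsStrictOrderedRing F]
    {L : Set (F × (Fin 3 → F))} (hL : IsParticle L) :
    ∃ p d : F × (Fin 3 → F), d ≠ 0 ∧ L = line F p d := by
  obtain ⟨p, d, hd, -, rfl⟩ := hL
  exact ⟨p, d, fun h => hd (by rw [h]; rfl), rfl⟩

theorem stmt0_general {F : Type*} [Field F] [LinearOrder F] [IsStrictOrderedRing F]
    (a a' c d : Set (F × (Fin 3 → F)))
    (ha : IsParticle a) (ha' : IsParticle a') (hc : IsParticle c) (hd : IsParticle d)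
    (hdisj : a ∩ a' = ∅)
    (p1 p2 p3 p4 p5 : F × (Fin 3 → F))
    (h1 : p1 ∈ a ∩ c) (h2 : p2 ∈ a' ∩ c) (h3 : p3 ∈ a ∩ d)
    (h4 : p4 ∈ a' ∩ d) (h5 : p5 ∈ c ∩ d)
    (hdist : [p1, p2, p3, p4, p5].Pairwise (· ≠ ·)) :
    LinesParallel a a' := by
  simp only [List.pairwise_cons, List.mem_cons, List.not_mem_nil,
    forall_eq_or_imp] at hdist
  obtain ⟨⟨h12, -, -, h15, -⟩, ⟨-, h24, -⟩, ⟨h34, -⟩, -⟩ := hdist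
  obtain ⟨p, v, -, -, rfl⟩ := ha
  obtain ⟨p', v', hv', rfl⟩ := ha'.exists_eq_line
  obtain ⟨pc, vc, -, -, rfl⟩ := hc
  obtain ⟨pd, vd, -, -, rfl⟩ := hd
  obtain ⟨l, hl⟩ := exists_eq_smul_of_disjoint_of_transversals
    (Set.disjoint_iff_inter_eq_empty.mpr hdisj) h1.1 h2.1 h3.1 h4.1
    (mem_line_sub_of_mem_line h1.2 h2.2 h5.1 h12) (mem_line_sub_of_mem_line h3.2 h4.2 h5.2 h34)
    h15 h24
  exact ⟨p' - p, line_eq_image_add_of_eq_smul (left_ne_zero_of_smul (hl ▸ hv')) hl⟩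

/-- if distinct particles `a, a'` do not meet, and there are particles
`c, d` meeting `a`, `a'` and each other in 5 distinct points, then `a` and `a'`
are parallel lines in `F^4`. -/
theorem stmt0 {F : Type*} [Field F] [LinearOrder F] [IsStrictOrderedRing F] (hEu : IsEuclidean F)
    (a a' c d : Set (F × (Fin 3 → F)))
    (ha : IsParticle a) (ha' : IsParticle a') (hc : IsParticle c) (hd : IsParticle d)
    (hne : a ≠ a') (hdisj : a ∩ a' = ∅)
    (p1 p2 p3 p4 p5 : F × (Fin 3 → F))
    (h1 : p1 ∈ a ∩ c) (h2 : p2 ∈ a' ∩ c) (h3 : p3 ∈ a ∩ d)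
    (h4 : p4 ∈ a' ∩ d) (h5 : p5 ∈ c ∩ d)
    (hdist : [p1, p2, p3, p4, p5].Pairwise (· ≠ ·)) :
    LinesParallel a a' :=
  stmt0_general a a' c d ha ha' hc hd hdisj p1 p2 p3 p4 p5 h1 h2 h3 h4 h5 hdist
end

section
/- In F^4 over a Euclidean field F, two events e, e' are simultaneous with respect to the time axis (in the sense of radar simultaneity: there exists a vertical line a' from which light signals emitted at a common point reach e and e' and the reflected signals return to a' at a common point) if and only if e and e' have the same time coordinate. -/
/-- Radar simultaneity w.r.t. vertical observers. -/
def Simul {F : Type*} [Field F] [LinearOrder F] [IsStrictOrderedRing F] (e e' : F × (Fin 3 → F)) : Prop :=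
  ∃ L : Set (F × (Fin 3 → F)), IsVertical L ∧
    ∃ e1 ∈ L, ∃ e2 ∈ L, Sig e1 e ∧ Sig e1 e' ∧ Sig e e2 ∧ Sig e' e2

/-! An event lies halfway in time between the emission and the return of a radar signal sent from a
vertical observer, which gives one direction. Conversely, an observer at the spatial midpoint of two
simultaneous events sees both at the same spatial distance `r`, so signals emitted at `t - r` reach both
and return at `t + r`; the Euclidean field supplies `r`. -/

section Radar

variable {F : Type*} [Field F] [LinearOrder F] [IsStrictOrderedRing F]

lemma nsq_nonneg (v : Fin 3 → F) : 0 ≤ nsq v := by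
  unfold nsq; positivity

lemma nsq_sub_comm (u v : Fin 3 → F) : nsq (u - v) = nsq (v - u) := by
  simp only [nsq, Pi.sub_apply]; ring

lemma nsq_sub_midpoint_comm (u v : Fin 3 → F) :
    nsq (u - midpoint F u v) = nsq (v - midpoint F u v) := by
  simp only [nsq, midpoint_eq_smul_add, invOf_eq_inv, Pi.sub_apply, Pi.smul_apply, Pi.add_apply,
    smul_eq_mul]
  ring

lemma IsEuclidean.exists_nonneg_sq_eq (hF : IsEuclidean F) {x : F} (hx : 0 ≤ x) :
    ∃ r : F, 0 ≤ r ∧ r ^ 2 = x := by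
  rcases hx.lt_or_eq with hx | rfl
  · obtain ⟨y, hy⟩ := hF x hx
    exact ⟨|y|, abs_nonneg y, by rw [sq_abs, hy]⟩
  · exact ⟨0, le_rfl, by ring⟩

lemma Sig.two_mul_fst_eq {a p b : F × (Fin 3 → F)} (hap : Sig a p) (hpb : Sig p b)
    (hab : a.2 = b.2) : 2 * p.1 = a.1 + b.1 := by
  obtain ⟨hle₁, hsq₁⟩ := hap
  obtain ⟨hle₂, hsq₂⟩ := hpb
  rw [nsq_sub_comm, ← hab, hsq₁] at hsq₂
  nlinarith

lemma sig_sub_and_sig_add_of_sq_eq {p : F × (Fin 3 → F)} {v : Fin 3 → F} {r : F} (hr : 0 ≤ r)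
    (hsq : r ^ 2 = nsq (p.2 - v)) : Sig (p.1 - r, v) p ∧ Sig p (p.1 + r, v) := by
  refine ⟨⟨by simpa using hr, ?_⟩, ⟨by simpa using hr, ?_⟩⟩
  · simp only [sub_sub_cancel, hsq]
  · simp only [add_sub_cancel_left, nsq_sub_comm v, hsq]

end Radar

/-- two events are radar-simultaneous w.r.t. a vertical observer
iff they have the same time coordinate. -/
theorem stmt2 {F : Type*} [Field F] [LinearOrder F] [IsStrictOrderedRing F] (hEu : IsEuclidean F)
    (e e' : F × (Fin 3 → F)) :
    Simul e e' ↔ e.1 = e'.1 := by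
  constructor
  · rintro ⟨L, ⟨v, rfl⟩, e₁, he₁, e₂, he₂, h₁, h₁', h₂, h₂'⟩
    have hv : e₁.2 = e₂.2 := he₁.trans he₂.symm
    linarith [h₁.two_mul_fst_eq h₂ hv, h₁'.two_mul_fst_eq h₂' hv]
  · intro ht
    set m := midpoint F e.2 e'.2
    obtain ⟨r, hr, hsq⟩ := hEu.exists_nonneg_sq_eq (nsq_nonneg (e.2 - m))
    obtain ⟨h₁, h₂⟩ := sig_sub_and_sig_add_of_sq_eq hr hsq
    obtain ⟨h₁', h₂'⟩ :=
      sig_sub_and_sig_add_of_sq_eq (p := e') hr (hsq.trans (nsq_sub_midpoint_comm _ _))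
    rw [← ht] at h₁' h₂'
    exact ⟨{x | x.2 = m}, ⟨m, rfl⟩, _, rfl, _, rfl, h₁, h₁', h₂, h₂'⟩
end

section
/- Conversely to time-equidistance: if e1, e2, e3, e4 lie on the time axis with (e2)_t - (e1)_t = (e4)_t - (e3)_t and (e3)_t > (e1)_t, then there exist a vertical line a' and events f, f' on a' realizing the signalling configuration (forward light signals from e1 to f, f to e3, e2 to f', f' to e4). -/
/-
Place the mirror on the vertical line at spatial distance `r = (t₃ - t₁)/2` from the time axis.
A signal sent from the axis at time `t` reaches it at `t + r` and is back on the axis at `t + 2r`;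
since `t₄ - t₂ = t₃ - t₁`, the same line reflects `e₂` to `e₄`.
-/

section

variable {F : Type*} [Field F] [LinearOrder F] [IsStrictOrderedRing F]

theorem nsq_neg (v : Fin 3 → F) : nsq (-v) = nsq v := by
  simp [nsq]

theorem nsq_vecCons_zero (r : F) : nsq ![r, 0, 0] = r ^ 2 := by
  simp [nsq]

theorem sig_of_axis {t s : F} {v : Fin 3 → F} (hts : t ≤ s) (hv : nsq v = (s - t) ^ 2) :
    Sig (t, 0) (s, v) :=
  ⟨hts, by simpa using hv⟩

theorem sig_to_axis {t s : F} {v : Fin 3 → F} (hts : t ≤ s) (hv : nsq v = (s - t) ^ 2) :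
    Sig (t, v) (s, 0) :=
  ⟨hts, by simpa [zero_sub, nsq_neg] using hv⟩

theorem sig_axis_midpoint_axis {t t' : F} {v : Fin 3 → F} (htt' : t ≤ t')
    (hv : nsq v = ((t' - t) / 2) ^ 2) :
    Sig (t, 0) ((t + t') / 2, v) ∧ Sig ((t + t') / 2, v) (t', 0) :=
  ⟨sig_of_axis (by linarith) (by rw [hv]; ring),
    sig_to_axis (by linarith) (by rw [hv]; ring)⟩

end

theorem stmt7_general {F : Type*} [Field F] [LinearOrder F] [IsStrictOrderedRing F]
    (t1 t2 t3 t4 : F) (heq : t2 - t1 = t4 - t3) (hlt : t1 < t3) :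
    ∃ L : Set (F × (Fin 3 → F)), IsVertical L ∧
      ∃ f ∈ L, ∃ f' ∈ L,
        Sig ((t1, 0) : F × (Fin 3 → F)) f ∧
        Sig f ((t3, 0) : F × (Fin 3 → F)) ∧
        Sig ((t2, 0) : F × (Fin 3 → F)) f' ∧
        Sig f' ((t4, 0) : F × (Fin 3 → F)) := by
  set v : Fin 3 → F := ![(t3 - t1) / 2, 0, 0]
  have hv₁ : nsq v = ((t3 - t1) / 2) ^ 2 := nsq_vecCons_zero _
  have hv₂ : nsq v = ((t4 - t2) / 2) ^ 2 := by rw [hv₁]; congr 2; linarith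
  obtain ⟨h₁, h₃⟩ := sig_axis_midpoint_axis hlt.le hv₁
  obtain ⟨h₂, h₄⟩ := sig_axis_midpoint_axis (by linarith) hv₂
  exact ⟨{x | x.2 = v}, ⟨v, rfl⟩, _, rfl, _, rfl, h₁, h₃, h₂, h₄⟩

/-- converse of time-equidistance: if `e1,…,e4` lie on the time axis,
`t2 - t1 = t4 - t3` and `t3 > t1`, then the radar configuration witnessing
time-equidistance exists. -/
theorem stmt7 {F : Type*} [Field F] [LinearOrder F] [IsStrictOrderedRing F] (hEu : IsEuclidean F)
    (t1 t2 t3 t4 : F) (heq : t2 - t1 = t4 - t3) (hlt : t1 < t3) :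
    ∃ L : Set (F × (Fin 3 → F)), IsVertical L ∧
      ∃ f ∈ L, ∃ f' ∈ L,
        Sig ((t1, 0) : F × (Fin 3 → F)) f ∧
        Sig f ((t3, 0) : F × (Fin 3 → F)) ∧
        Sig ((t2, 0) : F × (Fin 3 → F)) f' ∧
        Sig f' ((t4, 0) : F × (Fin 3 → F)) :=
  stmt7_general t1 t2 t3 t4 heq hlt
end

section
/- The Affine Desargues configuration used in the motionlessness experiment is sound in F^4: suppose three 'ball' lines b1, b2, b3 emanate from a common event ε, and an observer's line a intersects them so that the light-signal reflection configuration holds (signal from a∩b1 to a point on b2, reflected back arriving at a at a∩b3). If another line a' also satisfies the same reflection configuration with the same balls, and a, a' are coplanar with appropriate lines, then a' is parallel to a. Prove the planar special case in F^2 (1 time + 1 space dimension): if the configuration of light signals (slope ±1 lines) from the intersection events holds for both a and a', then a' is parallel to a. -/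
/-- A particle line in `F^2` (coordinates `(t, x)`): a line of slope `|dx/dt| < 1`. -/
def IsParticle2 {F : Type*} [Field F] [LinearOrder F] [IsStrictOrderedRing F] (L : Set (F × F)) : Prop :=
  ∃ p d : F × F, d.1 ≠ 0 ∧ d.2 ^ 2 < d.1 ^ 2 ∧ L = {x | ∃ s : F, x = p + s • d}

/-- Parallel subsets of `F^2`: one is a translate of the other. -/
def Par2 {F : Type*} [Field F] [LinearOrder F] [IsStrictOrderedRing F] (L L' : Set (F × F)) : Prop :=
  ∃ w : F × F, L' = (fun x => x + w) '' L

-- A non-vertical line as a graph over the time axis; the light-signal hypotheses of the theorem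
-- are literally memberships `q ∈ lineThrough p s`.
def lineThrough {F : Type*} [Field F] (e : F × F) (v : F) : Set (F × F) :=
  {x | x.2 - e.2 = v * (x.1 - e.1)}

section Ordered

variable {F : Type*} [Field F] [LinearOrder F] [IsStrictOrderedRing F]

theorem IsParticle2.exists_eq_lineThrough {L : Set (F × F)} (h : IsParticle2 L) {e : F × F}
    (he : e ∈ L) : ∃ v : F, v ^ 2 < 1 ∧ L = lineThrough e v := by
  obtain ⟨p, d, hd1, hd2, rfl⟩ := h
  obtain ⟨s₀, rfl⟩ := he
  refine ⟨d.2 / d.1, ?_, ?_⟩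
  · rwa [div_pow, div_lt_one (by positivity)]
  ext x
  simp only [lineThrough, Set.mem_ofPred_eq, Prod.ext_iff, Prod.fst_add, Prod.snd_add,
    Prod.smul_fst, Prod.smul_snd, smul_eq_mul]
  constructor
  · rintro ⟨t, h1, h2⟩
    rw [h1, h2]
    field_simp
    ring
  · intro hx
    refine ⟨s₀ + (x.1 - (p.1 + s₀ * d.1)) / d.1, by field_simp; ring, ?_⟩
    field_simp at hx ⊢
    linear_combination hx

theorem par2_lineThrough (e e' : F × F) (v : F) : Par2 (lineThrough e v) (lineThrough e' v) := by
  refine ⟨e' - e, Set.ext fun x => ⟨fun hx => ⟨x - (e' - e), ?_, sub_add_cancel x _⟩, ?_⟩⟩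
  · simp only [lineThrough, Set.mem_ofPred_eq, Prod.fst_sub, Prod.snd_sub] at hx ⊢
    linear_combination hx
  · rintro ⟨y, hy, rfl⟩
    simp only [lineThrough, Set.mem_ofPred_eq, Prod.fst_add, Prod.snd_add, Prod.fst_sub,
      Prod.snd_sub] at hy ⊢
    linear_combination hy

end Ordered

theorem ne_of_sq_lt_one_of_sq_eq_one {M : Type*} [Monoid M] [Preorder M] {v s : M}
    (hv : v ^ 2 < 1) (hs : s ^ 2 = 1) : v ≠ s := by
  rintro rfl
  exact hv.ne hs

section Algebra

variable {F : Type*} [Field F]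

theorem fst_ne_of_mem_lineThrough {e p : F × F} {v : F} (hp : p ∈ lineThrough e v) (hpe : p ≠ e) :
    p.1 ≠ e.1 := by
  intro h1
  refine hpe (Prod.ext h1 ?_)
  have h2 : p.2 - e.2 = v * (p.1 - e.1) := hp
  rw [h1, sub_self, mul_zero, sub_eq_zero] at h2
  exact h2

theorem reflection_time_relation {e p₁ q p₃ : F × F} {v₁ v₂ v₃ s : F}
    (hp₁ : p₁ ∈ lineThrough e v₁) (hq : q ∈ lineThrough e v₂) (hp₃ : p₃ ∈ lineThrough e v₃)
    (hin : q ∈ lineThrough p₁ s) (hout : p₃ ∈ lineThrough q (-s)) :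
    (p₃.1 - e.1) * ((v₂ - s) * (v₃ + s)) = (p₁.1 - e.1) * ((v₁ - s) * (v₂ + s)) := by
  simp only [lineThrough, Set.mem_ofPred_eq] at *
  linear_combination (v₂ + s) * (hin - hq + hp₁) + (v₂ - s) * (hout - hp₃ + hq)

theorem slope_mul_sub_eq {e p₁ p₃ : F × F} {v₁ v₃ v : F}
    (hp₁ : p₁ ∈ lineThrough e v₁) (hp₃ : p₃ ∈ lineThrough e v₃) (h : p₃ ∈ lineThrough p₁ v) :
    v * ((p₃.1 - e.1) - (p₁.1 - e.1)) = v₃ * (p₃.1 - e.1) - v₁ * (p₁.1 - e.1) := by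
  simp only [lineThrough, Set.mem_ofPred_eq] at *
  linear_combination hp₃ - hp₁ - h

/-- Converse of the intercept theorem, with proportionality measured in the time coordinate. -/
theorem slope_eq_of_proportional {e p₁ p₃ p₁' p₃' : F × F} {v₁ v₃ v v' : F} (hv : v₁ ≠ v₃)
    (hp₁ : p₁ ∈ lineThrough e v₁) (hp₃ : p₃ ∈ lineThrough e v₃) (h : p₃ ∈ lineThrough p₁ v)
    (hp₁' : p₁' ∈ lineThrough e v₁) (hp₃' : p₃' ∈ lineThrough e v₃) (h' : p₃' ∈ lineThrough p₁' v')
    (ht₁ : p₁.1 ≠ e.1) (ht₁' : p₁'.1 ≠ e.1)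
    (hprop : (p₃.1 - e.1) * (p₁'.1 - e.1) = (p₃'.1 - e.1) * (p₁.1 - e.1)) : v = v' := by
  have hA := slope_mul_sub_eq hp₁ hp₃ h
  have hA' := slope_mul_sub_eq hp₁' hp₃' h'
  have ht₃₁ : p₃.1 - p₁.1 ≠ 0 := by
    intro h0
    have hz : (v₁ - v₃) * (p₁.1 - e.1) = 0 := by linear_combination hA + (v₃ - v) * h0
    rcases mul_eq_zero.mp hz with hz | hz
    · exact hv (sub_eq_zero.mp hz)
    · exact ht₁ (sub_eq_zero.mp hz)
  refine mul_right_cancel₀ (mul_ne_zero ht₃₁ (sub_ne_zero.mpr ht₁')) ?_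
  linear_combination (p₁'.1 - e.1) * hA - (p₁.1 - e.1) * hA' + (v₃ - v') * hprop

end Algebra

theorem stmt17_general {F : Type*} [Field F] [LinearOrder F] [IsStrictOrderedRing F]
    (b1 b2 b3 a a' : Set (F × F))
    (hb1 : IsParticle2 b1) (hb2 : IsParticle2 b2) (hb3 : IsParticle2 b3)
    (ha : IsParticle2 a) (ha' : IsParticle2 a')
    (eps : F × F) (he1 : eps ∈ b1) (he2 : eps ∈ b2) (he3 : eps ∈ b3)
    (h13 : b1 ≠ b3)
    (hea : eps ∉ a) (hea' : eps ∉ a')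
    (s : F) (hs : s = 1 ∨ s = -1)
    (p1 p3 q : F × F)
    (hp1 : p1 ∈ a ∩ b1) (hp3 : p3 ∈ a ∩ b3) (hq : q ∈ b2)
    (hseg1 : q.2 - p1.2 = s * (q.1 - p1.1))
    (hseg2 : p3.2 - q.2 = -s * (p3.1 - q.1))
    (p1' p3' q' : F × F)
    (hp1' : p1' ∈ a' ∩ b1) (hp3' : p3' ∈ a' ∩ b3) (hq' : q' ∈ b2)
    (hseg1' : q'.2 - p1'.2 = s * (q'.1 - p1'.1))
    (hseg2' : p3'.2 - q'.2 = -s * (p3'.1 - q'.1)) :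
    Par2 a a' := by
  obtain ⟨v1, -, rfl⟩ := hb1.exists_eq_lineThrough he1
  obtain ⟨v2, hv2, rfl⟩ := hb2.exists_eq_lineThrough he2
  obtain ⟨v3, hv3, rfl⟩ := hb3.exists_eq_lineThrough he3
  obtain ⟨va, -, rfl⟩ := ha.exists_eq_lineThrough hp1.1
  obtain ⟨va', -, rfl⟩ := ha'.exists_eq_lineThrough hp1'.1
  have hs2 : s ^ 2 = 1 := by rcases hs with rfl | rfl <;> norm_num
  have hlight : (v2 - s) * (v3 + s) ≠ 0 := by
    refine mul_ne_zero (sub_ne_zero.mpr (ne_of_sq_lt_one_of_sq_eq_one hv2 hs2)) ?_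
    rw [← sub_neg_eq_add]
    exact sub_ne_zero.mpr (ne_of_sq_lt_one_of_sq_eq_one hv3 (by rw [neg_sq, hs2]))
  have hr := reflection_time_relation hp1.2 hq hp3.2 hseg1 hseg2
  have hr' := reflection_time_relation hp1'.2 hq' hp3'.2 hseg1' hseg2'
  have hprop : (p3.1 - eps.1) * (p1'.1 - eps.1) = (p3'.1 - eps.1) * (p1.1 - eps.1) :=
    mul_right_cancel₀ hlight (by linear_combination (p1'.1 - eps.1) * hr - (p1.1 - eps.1) * hr')
  have hv13 : v1 ≠ v3 := by rintro rfl; exact h13 rfl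
  have hva := slope_eq_of_proportional hv13 hp1.2 hp3.2 hp3.1 hp1'.2 hp3'.2 hp3'.1
    (fst_ne_of_mem_lineThrough hp1.2 (ne_of_mem_of_not_mem hp1.1 hea))
    (fst_ne_of_mem_lineThrough hp1'.2 (ne_of_mem_of_not_mem hp1'.1 hea')) hprop
  exact hva ▸ par2_lineThrough p1 p1' va

/-- planar Affine Desargues configuration of the motionlessness
experiment: three particle lines `b1, b2, b3` through a common event `ε` with distinct
velocities; a particle line `a` not through `ε` meets `b1` at `p1`, `b3` at `p3`, and a
point `q` on `b2` is joined to `p1` by a light line of slope `s = ±1` and to `p3` by the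
reflected light line of slope `-s`. If `a'` satisfies the same configuration (with the
same slopes), then `a'` is parallel to `a`. -/
theorem stmt17 {F : Type*} [Field F] [LinearOrder F] [IsStrictOrderedRing F] (hEu : IsEuclidean F)
    (b1 b2 b3 a a' : Set (F × F))
    (hb1 : IsParticle2 b1) (hb2 : IsParticle2 b2) (hb3 : IsParticle2 b3)
    (ha : IsParticle2 a) (ha' : IsParticle2 a')
    (eps : F × F) (he1 : eps ∈ b1) (he2 : eps ∈ b2) (he3 : eps ∈ b3)
    (h12 : b1 ≠ b2) (h13 : b1 ≠ b3) (h23 : b2 ≠ b3)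
    (hea : eps ∉ a) (hea' : eps ∉ a')
    (s : F) (hs : s = 1 ∨ s = -1)
    (p1 p3 q : F × F)
    (hp1 : p1 ∈ a ∩ b1) (hp3 : p3 ∈ a ∩ b3) (hq : q ∈ b2)
    (hseg1 : q.2 - p1.2 = s * (q.1 - p1.1))
    (hseg2 : p3.2 - q.2 = -s * (p3.1 - q.1))
    (p1' p3' q' : F × F)
    (hp1' : p1' ∈ a' ∩ b1) (hp3' : p3' ∈ a' ∩ b3) (hq' : q' ∈ b2)
    (hseg1' : q'.2 - p1'.2 = s * (q'.1 - p1'.1))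
    (hseg2' : p3'.2 - q'.2 = -s * (p3'.1 - q'.1)) :
    Par2 a a' :=
  stmt17_general b1 b2 b3 a a' hb1 hb2 hb3 ha ha' eps he1 he2 he3 h13 hea hea' s hs p1 p3 q hp1 hp3
    hq hseg1 hseg2 p1' p3' q' hp1' hp3' hq' hseg1' hseg2'
end
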